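/- arXiv:1312.2433 — 2 statements merged into one kernel-verified Lean document; each statement's English description precedes it below -/
import Mathlib

section
/- Let T₁, T₂ be the first two jump times of a Poisson process N with intensity λ > 0, and 0 < a < 1. Set β = λ(1/a - 1). Then for all t ≥ 0, P(T₁ ∧ aT₂ > t) · e^{λt} restricted to the event {T₁ > t} computes as: P(T₁ ∧ aT₂ > t | F_t) = 1_{T₁ > t} e^{-βt}(βt + 1), where F_t is the natural filtration of N. -/
/-!
Before `T₁` the counting process vanishes, so on the event `S = {T₁ > t}` every `N s` with
`s ≤ t` is constant and no set of `F t` can split `S`: each one contains `S` or misses it.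
Since `{τ > t} ⊆ S`, the conditional probability is therefore `1_S · P(τ > t) / P(S)`.
With `u = t / a ≥ t`, `P(τ > t) = P(T₁ > t, T₁ + (T₂ - T₁) > u) = e^{-λu}(λ(u - t) + 1)` by
independence of the exponential inter-arrival times, `P(S) = e^{-λt}`, and `λ(u - t) = βt`.
-/

open MeasureTheory ProbabilityTheory Real Set

lemma measurableSet_lt_fst_lt_fst_add_snd (t u : ℝ) :
    MeasurableSet {p : ℝ × ℝ | t < p.1 ∧ u < p.1 + p.2} :=
  (measurableSet_lt measurable_const measurable_fst).inter
    (measurableSet_lt measurable_const (measurable_fst.add measurable_snd))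

lemma expMeasure_Ioi {r : ℝ} (hr : 0 < r) (x : ℝ) :
    expMeasure r (Ioi x) = ENNReal.ofReal (exp (-(r * max x 0))) := by
  have := isProbabilityMeasure_expMeasure hr
  rw [← compl_Iic, prob_compl_eq_one_sub measurableSet_Iic, ← ofReal_cdf, cdf_expMeasure_eq hr,
    ← ENNReal.ofReal_one, ← ENNReal.ofReal_sub _ (by split_ifs <;> simp; positivity)]
  split_ifs with hx
  · simp [max_eq_left hx]
  · simp [max_eq_right (not_le.1 hx).le]

lemma setLIntegral_expMeasure_Ioi_sub {r : ℝ} (hr : 0 < r) {t u : ℝ} (ht : 0 ≤ t) :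
    ∫⁻ x in Ioc t u, expMeasure r (Ioi (u - x)) ∂expMeasure r
      = ENNReal.ofReal (r * exp (-(r * u))) * ENNReal.ofReal (u - t) := by
  have hmono : Monotone fun x => expMeasure r (Ioi (u - x)) :=
    fun x y hxy => measure_mono (Ioi_subset_Ioi (by linarith))
  have hdensity : ∀ x ∈ Ioc t u,
      exponentialPDF r x * expMeasure r (Ioi (u - x)) = ENNReal.ofReal (r * exp (-(r * u))) := by
    rintro x ⟨htx, hxu⟩
    rw [exponentialPDF_of_nonneg (ht.trans htx.le), expMeasure_Ioi hr,
      max_eq_left (sub_nonneg.2 hxu), ← ENNReal.ofReal_mul (by positivity), mul_assoc,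
      ← exp_add]
    ring_nf
  calc ∫⁻ x in Ioc t u, expMeasure r (Ioi (u - x)) ∂expMeasure r
      = ∫⁻ x in Ioc t u, exponentialPDF r x * expMeasure r (Ioi (u - x)) :=
        setLIntegral_withDensity_eq_setLIntegral_mul _
          (measurable_exponentialPDFReal r).ennreal_ofReal hmono.measurable measurableSet_Ioc
    _ = _ := by
      rw [setLIntegral_congr_fun measurableSet_Ioc hdensity, setLIntegral_const, Real.volume_Ioc]

lemma setLIntegral_expMeasure_Ioi_sub_of_le {r : ℝ} (hr : 0 < r) {u : ℝ} (hu : 0 ≤ u) :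
    ∫⁻ x in Ioi u, expMeasure r (Ioi (u - x)) ∂expMeasure r = ENNReal.ofReal (exp (-(r * u))) := by
  rw [setLIntegral_congr_fun measurableSet_Ioi fun x (hx : u < x) => by
      rw [expMeasure_Ioi hr, max_eq_right (by linarith)], setLIntegral_const, expMeasure_Ioi hr,
    max_eq_left hu]
  simp

lemma expMeasure_prod_lt_fst_lt_add {r t u : ℝ} (hr : 0 < r) (ht : 0 ≤ t) (htu : t ≤ u) :
    (expMeasure r).prod (expMeasure r) {p | t < p.1 ∧ u < p.1 + p.2}
      = ENNReal.ofReal (exp (-(r * u)) * (r * (u - t) + 1)) := by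
  have := isProbabilityMeasure_expMeasure hr
  have hsection : ∀ x, expMeasure r (Prod.mk x ⁻¹' {p : ℝ × ℝ | t < p.1 ∧ u < p.1 + p.2})
      = (Ioi t).indicator (fun x => expMeasure r (Ioi (u - x))) x := by
    intro x
    by_cases hx : t < x
    · simp [hx, Ioi, sub_lt_iff_lt_add']
    · simp [hx]
  rw [Measure.prod_apply (measurableSet_lt_fst_lt_fst_add_snd t u), lintegral_congr hsection,
    lintegral_indicator measurableSet_Ioi,
    ← Ioc_union_Ioi_eq_Ioi htu, lintegral_union measurableSet_Ioi (Ioc_disjoint_Ioi le_rfl),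
    setLIntegral_expMeasure_Ioi_sub hr ht, setLIntegral_expMeasure_Ioi_sub_of_le hr (ht.trans htu),
    ← ENNReal.ofReal_mul (by positivity),
    ← ENNReal.ofReal_add (mul_nonneg (by positivity) (sub_nonneg.2 htu)) (exp_pos _).le]
  ring_nf

lemma measure_lt_and_lt_add_of_indepFun {r t u : ℝ} (hr : 0 < r) (ht : 0 ≤ t) (htu : t ≤ u)
    {Ω : Type*} [MeasurableSpace Ω] {μ : Measure Ω} [IsFiniteMeasure μ] {X D : Ω → ℝ}
    (hX : Measurable X) (hD : Measurable D) (hXlaw : μ.map X = expMeasure r)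
    (hDlaw : μ.map D = expMeasure r) (hXD : IndepFun X D μ) :
    μ {ω | t < X ω ∧ u < X ω + D ω} = ENNReal.ofReal (exp (-(r * u)) * (r * (u - t) + 1)) := by
  have hlaw := (indepFun_iff_map_prod_eq_prod_map_map hX.aemeasurable hD.aemeasurable).1 hXD
  rw [hXlaw, hDlaw] at hlaw
  rw [← expMeasure_prod_lt_fst_lt_add hr ht htu, ← hlaw,
    Measure.map_apply (hX.prodMk hD) (measurableSet_lt_fst_lt_fst_add_snd t u)]
  rfl

lemma measure_lt_of_map_eq_expMeasure {r t : ℝ} (hr : 0 < r) (ht : 0 ≤ t) {Ω : Type*}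
    [MeasurableSpace Ω] {μ : Measure Ω} {X : Ω → ℝ} (hX : Measurable X)
    (hXlaw : μ.map X = expMeasure r) :
    μ {ω | t < X ω} = ENNReal.ofReal (exp (-(r * t))) := by
  rw [show {ω | t < X ω} = X ⁻¹' Ioi t from rfl, ← Measure.map_apply hX measurableSet_Ioi, hXlaw,
    expMeasure_Ioi hr, max_eq_left ht]

lemma measureReal_lt_and_lt_add_div_measureReal_lt {r t u : ℝ} (hr : 0 < r) (ht : 0 ≤ t)
    (htu : t ≤ u) {Ω : Type*} [MeasurableSpace Ω] {μ : Measure Ω} [IsFiniteMeasure μ]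
    {X D : Ω → ℝ} (hX : Measurable X) (hD : Measurable D) (hXlaw : μ.map X = expMeasure r)
    (hDlaw : μ.map D = expMeasure r) (hXD : IndepFun X D μ) :
    μ.real {ω | t < X ω ∧ u < X ω + D ω} / μ.real {ω | t < X ω}
      = exp (-(r * (u - t))) * (r * (u - t) + 1) := by
  have hrut : 0 ≤ r * (u - t) := mul_nonneg hr.le (sub_nonneg.2 htu)
  rw [measureReal_def, measureReal_def,
    measure_lt_and_lt_add_of_indepFun hr ht htu hX hD hXlaw hDlaw hXD,
    measure_lt_of_map_eq_expMeasure hr ht hX hXlaw, ENNReal.toReal_ofReal (by positivity),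
    ENNReal.toReal_ofReal (exp_pos _).le, mul_div_right_comm, ← exp_sub]
  ring_nf

namespace MeasurableSpace

variable {Ω : Type*}

abbrev notSplitting (S : Set Ω) : MeasurableSpace Ω where
  MeasurableSet' A := S ⊆ A ∨ Disjoint A S
  measurableSet_empty := Or.inr (empty_disjoint S)
  measurableSet_compl A := by
    rintro (h | h)
    · exact Or.inr (disjoint_compl_left.mono_right h)
    · exact Or.inl h.subset_compl_left
  measurableSet_iUnion f hf := by
    by_cases hsub : ∃ i, S ⊆ f i
    · obtain ⟨i, hi⟩ := hsub
      exact Or.inl (hi.trans (subset_iUnion f i))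
    · push Not at hsub
      exact Or.inr (disjoint_iUnion_left.2 fun i => (hf i).resolve_left (hsub i))

lemma comap_le_notSplitting {β : Type*} [MeasurableSpace β] {f : Ω → β} {S : Set Ω} {y : β}
    (hf : ∀ ω ∈ S, f ω = y) : MeasurableSpace.comap f ‹_› ≤ notSplitting S := by
  rintro _ ⟨B, -, rfl⟩
  by_cases hy : y ∈ B
  · exact Or.inl fun ω hω => by simp [hf ω hω, hy]
  · exact Or.inr (disjoint_left.2 fun ω hB hS => hy (hf ω hS ▸ hB))

end MeasurableSpace

lemma condExp_indicator_of_subset_of_le_notSplitting {Ω : Type*} {m m₀ : MeasurableSpace Ω}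
    {μ : Measure Ω} [IsFiniteMeasure μ] (hm : m ≤ m₀) {S E : Set Ω}
    (hmS : m ≤ MeasurableSpace.notSplitting S) (hS : MeasurableSet[m] S)
    (hE : MeasurableSet E) (hES : E ⊆ S) :
    μ[E.indicator fun _ => (1 : ℝ) | m] =ᵐ[μ] S.indicator fun _ => μ.real E / μ.real S := by
  have hS₀ : MeasurableSet S := hm S hS
  have hratio : μ.real E / μ.real S * μ.real S = μ.real E := by
    rcases eq_or_ne (μ.real S) 0 with h0 | h0
    · rw [h0, mul_zero]
      exact le_antisymm measureReal_nonneg (h0 ▸ measureReal_mono hES)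
    · exact div_mul_cancel₀ _ h0
  refine (ae_eq_condExp_of_forall_setIntegral_eq hm ((integrable_const _).indicator hE)
    (fun A _ _ => ((integrable_const _).indicator hS₀).integrableOn) (fun A hA _ => ?_)
    (stronglyMeasurable_const.indicator hS).aestronglyMeasurable).symm
  rw [setIntegral_indicator hS₀, setIntegral_indicator hE, setIntegral_const, setIntegral_const]
  rcases hmS A hA with hSA | hAS
  · rw [inter_eq_right.2 hSA, inter_eq_right.2 (hES.trans hSA), smul_eq_mul, smul_eq_mul,
      mul_one, mul_comm, hratio]
  · rw [hAS.inter_eq, (hAS.mono_right hES).inter_eq]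
    simp

lemma ite_add_ite_eq_zero_iff {s x y : ℝ} (hxy : x < y) :
    ((if x ≤ s then 1 else 0) + (if y ≤ s then 1 else 0) : ℝ) = 0 ↔ s < x := by
  by_cases hx : x ≤ s
  · simp only [hx, if_true, not_lt.2 hx, iff_false]
    split_ifs <;> norm_num
  · simp [hx, (lt_trans (not_le.1 hx) hxy).not_ge, not_le.1 hx]

lemma measurable_jumpCount {Ω : Type*} [MeasurableSpace Ω] {T₁ T₂ : Ω → ℝ} {N : ℝ → Ω → ℝ}
    (hT₁ : Measurable T₁) (hT₂ : Measurable T₂)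
    (hN : ∀ t ω, N t ω = (if T₁ ω ≤ t then 1 else 0) + (if T₂ ω ≤ t then 1 else 0)) (s : ℝ) :
    Measurable (N s) := by
  rw [funext (hN s)]
  exact (measurable_const.ite (measurableSet_le hT₁ measurable_const) measurable_const).add
    (measurable_const.ite (measurableSet_le hT₂ measurable_const) measurable_const)

/-- For the first two jump times `T₁, T₂` of a Poisson process with intensity `λ`
(`T₁ ~ Exp(λ)`, `T₂ - T₁ ~ Exp(λ)` independent of `T₁`), `0 < a < 1` and
`β = λ(1/a - 1)`, the Azéma supermartingale of `τ = T₁ ∧ aT₂` is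
`P(τ > t | F_t) = 1_{T₁ > t} e^{-βt}(βt + 1)`, where `F` is the natural filtration
of the counting process `N`. -/
theorem condexp_min_jump_times {Ω : Type*} [MeasurableSpace Ω] (μ : Measure Ω)
    [IsProbabilityMeasure μ] (lam a : ℝ) (hlam : 0 < lam) (ha0 : 0 < a) (ha1 : a < 1)
    (T₁ T₂ : Ω → ℝ) (hT₁m : Measurable T₁) (hT₂m : Measurable T₂)
    (hpos : ∀ ω, 0 < T₁ ω ∧ T₁ ω < T₂ ω)
    (hd1 : Measure.map T₁ μ = expMeasure lam)
    (hd2 : Measure.map (fun ω => T₂ ω - T₁ ω) μ = expMeasure lam)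
    (hindep : IndepFun T₁ (fun ω => T₂ ω - T₁ ω) μ)
    (N : ℝ → Ω → ℝ)
    (hN : ∀ t ω, N t ω = (if T₁ ω ≤ t then 1 else 0) + (if T₂ ω ≤ t then 1 else 0))
    (F : ℝ → MeasurableSpace Ω)
    (hF : ∀ t, F t = ⨆ s ∈ Set.Icc (0 : ℝ) t, MeasurableSpace.comap (N s) inferInstance)
    (β : ℝ) (hβ : β = lam * (1 / a - 1)) :
    ∀ t : ℝ, 0 ≤ t →
      μ[Set.indicator {ω | t < min (T₁ ω) (a * T₂ ω)} (fun _ => (1 : ℝ)) | F t]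
        =ᵐ[μ] fun ω => (if t < T₁ ω then 1 else 0) * (Real.exp (-β * t) * (β * t + 1)) := by
  intro t ht
  set S := {ω | t < T₁ ω}
  set E := {ω | t < T₁ ω ∧ t / a < T₁ ω + (T₂ ω - T₁ ω)}
  have hτ : {ω | t < min (T₁ ω) (a * T₂ ω)} = E := by
    ext ω
    simp [E, div_lt_iff₀ ha0, mul_comm]
  have hN_eq_zero : ∀ s ω, N s ω = 0 ↔ s < T₁ ω := fun s ω => by
    rw [hN, ite_add_ite_eq_zero_iff (hpos ω).2]
  have hF_le : F t ≤ ‹MeasurableSpace Ω› :=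
    hF t ▸ iSup₂_le fun s _ => (measurable_jumpCount hT₁m hT₂m hN s).comap_le
  have hF_notSplitting : F t ≤ MeasurableSpace.notSplitting S := hF t ▸ iSup₂_le fun s hs =>
    MeasurableSpace.comap_le_notSplitting fun ω hω => (hN_eq_zero s ω).2 (hs.2.trans_lt hω)
  have hS : MeasurableSet[F t] S := by
    have hN_le : MeasurableSpace.comap (N t) inferInstance ≤ F t := by
      rw [hF t]
      exact le_biSup (fun s => MeasurableSpace.comap (N s) inferInstance) ⟨ht, le_rfl⟩
    exact hN_le S ⟨{0}, measurableSet_singleton 0, ext (hN_eq_zero t)⟩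
  have hE : MeasurableSet E := (measurableSet_lt measurable_const hT₁m).inter
    (measurableSet_lt measurable_const (hT₁m.add (hT₂m.sub hT₁m)))
  have hratio : μ.real E / μ.real S = exp (-β * t) * (β * t + 1) := by
    have hβt : lam * (t / a - t) = β * t := by rw [hβ]; field_simp
    rw [measureReal_lt_and_lt_add_div_measureReal_lt (D := fun ω => T₂ ω - T₁ ω) hlam ht
      (le_div_self ht ha0 ha1.le) hT₁m (hT₂m.sub hT₁m) hd1 hd2 hindep, hβt, neg_mul]
  rw [hτ]
  refine (condExp_indicator_of_subset_of_le_notSplitting hF_le hF_notSplitting hS hE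
    fun ω hω => hω.1).trans (Filter.Eventually.of_forall fun ω => ?_)
  by_cases hω : t < T₁ ω <;> simp [S, hω, hratio]
end

section
/- Let T₁, T₂ be the first two jump times of a Poisson process with intensity λ, let k₁, k₂ > 0 with k₁ + k₂ = 1, and let τ = k₁T₁ + k₂T₂. Then on the event {T₁ ≤ t < T₂}, P(k₁T₁ + k₂T₂ > t | F_t) = e^{-λ(k₁/k₂)(t - T₁)}, so that Z_t := P(τ > t | F_t) = 1_{T₁ > t} + 1_{T₁ ≤ t} 1_{T₂ > t} e^{-λ(k₁/k₂)(t-T₁)}. -/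
/-!
Up to events inside `{T₂ ≤ t}`, on which both sides vanish, `F t` is generated by `T₁`, so it
suffices to compare integrals over the events `{T₁ ∈ S}`. Writing `τ = T₁ + k₂ E` with
`E = T₂ - T₁` independent of `T₁`, for `x ≤ t` one has
`P(x + k₂ E > t) = e^{-λ(t - x)/k₂} = e^{-λ(k₁/k₂)(t - x)} P(E > t - x)`,
which is what the claimed formula integrates to given `T₁ = x`.
-/

open MeasureTheory ProbabilityTheory Set

namespace MeasureTheory

lemma isPiSystem_measurableSet_union_subset {Ω : Type*} {m m₀ : MeasurableSpace Ω}
    (hm : m ≤ m₀) (B : Set Ω) :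
    IsPiSystem ({s | MeasurableSet[m] s} ∪ {s | MeasurableSet[m₀] s ∧ s ⊆ B}) := by
  rintro s (hs | ⟨hs, hsB⟩) u (hu | ⟨hu, huB⟩) -
  · exact Or.inl (hs.inter hu)
  · exact Or.inr ⟨(hm s hs).inter hu, inter_subset_right.trans huB⟩
  · exact Or.inr ⟨hs.inter (hm u hu), inter_subset_left.trans hsB⟩
  · exact Or.inr ⟨hs.inter hu, inter_subset_left.trans hsB⟩

variable {Ω E : Type*} [NormedAddCommGroup E] [NormedSpace ℝ E] [CompleteSpace E]
  {m m₀ : MeasurableSpace Ω} {μ : Measure Ω} {f g : Ω → E}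

theorem ae_eq_condExp_of_forall_setIntegral_eq_of_isPiSystem (hm : m ≤ m₀)
    [SigmaFinite (μ.trim hm)] {C : Set (Set Ω)} (hC : IsPiSystem C)
    (hCm : ∀ s ∈ C, MeasurableSet[m₀] s) (hmC : m ≤ MeasurableSpace.generateFrom C)
    (hf : Integrable f μ) (hg : Integrable g μ) (hgm : AEStronglyMeasurable[m] g μ)
    (huniv : ∫ x, g x ∂μ = ∫ x, f x ∂μ) (hC_eq : ∀ s ∈ C, ∫ x in s, g x ∂μ = ∫ x in s, f x ∂μ) :
    g =ᵐ[μ] μ[f | m] := by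
  have hgen : ∀ s, MeasurableSet[MeasurableSpace.generateFrom C] s →
      ∫ x in s, g x ∂μ = ∫ x in s, f x ∂μ := by
    intro s hs
    induction s, hs using MeasurableSpace.induction_on_inter rfl hC with
    | empty => simp
    | basic s hs => exact hC_eq s hs
    | compl s hs ih =>
      have hs₀ := MeasurableSpace.generateFrom_le hCm s hs
      rw [setIntegral_compl hs₀ hg, setIntegral_compl hs₀ hf, huniv, ih]
    | iUnion s hdisj hs ih =>
      have hs₀ i := MeasurableSpace.generateFrom_le hCm (s i) (hs i)
      rw [integral_iUnion hs₀ hdisj hg.integrableOn, integral_iUnion hs₀ hdisj hf.integrableOn]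
      exact tsum_congr ih
  exact ae_eq_condExp_of_forall_setIntegral_eq hm hf (fun s _ _ => hg.integrableOn)
    (fun s hs _ => hgen s (hmC s hs)) hgm

theorem ae_eq_condExp_of_forall_setIntegral_preimage_eq {α : Type*} [MeasurableSpace α]
    (hm : m ≤ m₀) [SigmaFinite (μ.trim hm)] {X : Ω → α} (hX : Measurable X) {B : Set Ω}
    (hmX : m ≤ MeasurableSpace.generateFrom
      ({s | MeasurableSet[MeasurableSpace.comap X inferInstance] s} ∪
        {s | MeasurableSet s ∧ s ⊆ B}))
    (hf : Integrable f μ) (hg : Integrable g μ) (hgm : AEStronglyMeasurable[m] g μ)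
    (hfB : ∀ ω ∈ B, f ω = 0) (hgB : ∀ ω ∈ B, g ω = 0)
    (hX_eq : ∀ S, MeasurableSet S → ∫ ω in X ⁻¹' S, g ω ∂μ = ∫ ω in X ⁻¹' S, f ω ∂μ) :
    g =ᵐ[μ] μ[f | m] := by
  refine ae_eq_condExp_of_forall_setIntegral_eq_of_isPiSystem hm
    (isPiSystem_measurableSet_union_subset hX.comap_le B) ?_ hmX hf hg hgm
    (by simpa using hX_eq univ .univ) ?_
  · rintro s (hs | ⟨hs, -⟩)
    exacts [hX.comap_le s hs, hs]
  · rintro s (⟨S, hS, rfl⟩ | ⟨-, hsB⟩)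
    · exact hX_eq S hS
    · rw [setIntegral_eq_zero_of_forall_eq_zero fun ω hω => hgB ω (hsB hω),
        setIntegral_eq_zero_of_forall_eq_zero fun ω hω => hfB ω (hsB hω)]

end MeasureTheory

namespace ProbabilityTheory

lemma IndepFun.setIntegral_preimage_comp_eq {Ω α β E : Type*}
    [MeasurableSpace Ω] [MeasurableSpace α] [MeasurableSpace β]
    [NormedAddCommGroup E] [NormedSpace ℝ E] {μ : Measure Ω} [IsFiniteMeasure μ]
    {X : Ω → α} {Y : Ω → β} (hXY : IndepFun X Y μ) (hX : AEMeasurable X μ)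
    (hY : AEMeasurable Y μ) {φ : α × β → E} (hφ : Integrable φ ((μ.map X).prod (μ.map Y)))
    {S : Set α} (hS : MeasurableSet S) :
    ∫ ω in X ⁻¹' S, φ (X ω, Y ω) ∂μ = ∫ x in S, ∫ y, φ (x, y) ∂μ.map Y ∂μ.map X := by
  have hmap := (indepFun_iff_map_prod_eq_prod_map_map hX hY).1 hXY
  calc ∫ ω in X ⁻¹' S, φ (X ω, Y ω) ∂μ
      = ∫ p in S ×ˢ univ, φ p ∂μ.map (fun ω => (X ω, Y ω)) := by
        rw [setIntegral_map (hS.prod .univ) (hmap ▸ hφ.aestronglyMeasurable) (hX.prodMk hY),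
          mk_preimage_prod, preimage_univ, inter_univ]
    _ = ∫ x in S, ∫ y, φ (x, y) ∂μ.map Y ∂μ.map X := by
        rw [hmap, setIntegral_prod _ hφ.integrableOn, Measure.restrict_univ]

lemma measureReal_expMeasure_Ioi {r : ℝ} (hr : 0 < r) (x : ℝ) :
    (expMeasure r).real (Ioi x) = Real.exp (-(r * max x 0)) := by
  have := isProbabilityMeasure_expMeasure hr
  rw [← compl_Iic, probReal_compl_eq_one_sub measurableSet_Iic, ← cdf_eq_real,
    cdf_expMeasure_eq hr]
  split_ifs with hx
  · rw [max_eq_left hx]; ring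
  · rw [max_eq_right (not_le.1 hx).le]; simp

end ProbabilityTheory

/-! In the coordinates `x = T₁`, `y = T₂ - T₁` and using `k₁ + k₂ = 1`,
`τ = x + k₂ y`; `azemaFormula (-λ k₁ / k₂) t` is the claimed value of `P(τ > t | F t)`. -/

noncomputable def tauIndicator (k₂ t : ℝ) (p : ℝ × ℝ) : ℝ :=
  if t < p.1 + k₂ * p.2 then 1 else 0

noncomputable def azemaFormula (c t : ℝ) (p : ℝ × ℝ) : ℝ :=
  if t < p.1 then 1 else if t < p.1 + p.2 then Real.exp (c * (t - p.1)) else 0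

section Formulas

variable {k₂ c t : ℝ} {p : ℝ × ℝ}

lemma measurable_tauIndicator : Measurable (tauIndicator k₂ t) :=
  Measurable.ite
    (measurableSet_lt measurable_const (measurable_fst.add (measurable_snd.const_mul k₂)))
    measurable_const measurable_const

lemma measurable_azemaFormula : Measurable (azemaFormula c t) :=
  Measurable.ite (measurableSet_lt measurable_const measurable_fst) measurable_const <|
    Measurable.ite (measurableSet_lt measurable_const (measurable_fst.add measurable_snd))
      (Real.measurable_exp.comp ((measurable_const.sub measurable_fst).const_mul c))
      measurable_const

lemma integrable_tauIndicator {ρ : Measure (ℝ × ℝ)} [IsFiniteMeasure ρ] :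
    Integrable (tauIndicator k₂ t) ρ := by
  refine .of_bound measurable_tauIndicator.aestronglyMeasurable 1 (ae_of_all _ fun p => ?_)
  unfold tauIndicator
  split_ifs <;> simp

lemma integrable_azemaFormula (hc : c ≤ 0) {ρ : Measure (ℝ × ℝ)} [IsFiniteMeasure ρ] :
    Integrable (azemaFormula c t) ρ := by
  refine .of_bound measurable_azemaFormula.aestronglyMeasurable 1 (ae_of_all _ fun p => ?_)
  unfold azemaFormula
  split_ifs with h
  · simp
  · rw [Real.norm_of_nonneg (Real.exp_nonneg _), Real.exp_le_one_iff]
    exact mul_nonpos_of_nonpos_of_nonneg hc (sub_nonneg.2 (not_lt.1 h))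
  · simp

lemma tauIndicator_eq_zero (hk₂ : k₂ ≤ 1) (hp : 0 ≤ p.2) (ht : p.1 + p.2 ≤ t) :
    tauIndicator k₂ t p = 0 :=
  if_neg (by nlinarith)

lemma azemaFormula_eq_zero (hp : 0 ≤ p.2) (ht : p.1 + p.2 ≤ t) : azemaFormula c t p = 0 := by
  simp [azemaFormula, not_lt.2 ht, not_lt.2 ((le_add_of_nonneg_right hp).trans ht)]

end Formulas

lemma integral_tauIndicator_expMeasure {r k₁ k₂ : ℝ} (hr : 0 < r) (hk₂ : 0 < k₂)
    (hk : k₁ + k₂ = 1) (t x : ℝ) :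
    ∫ y, tauIndicator k₂ t (x, y) ∂expMeasure r
      = ∫ y, azemaFormula (-r * (k₁ / k₂)) t (x, y) ∂expMeasure r := by
  have hτ : (fun y => tauIndicator k₂ t (x, y)) = (Ioi ((t - x) / k₂)).indicator (fun _ => 1) := by
    ext y
    simp only [tauIndicator, indicator_apply, mem_Ioi, div_lt_iff₀ hk₂]
    congr 1
    exact propext ⟨fun h => by linarith, fun h => by linarith⟩
  rw [hτ, integral_indicator_const _ measurableSet_Ioi, measureReal_expMeasure_Ioi hr]
  rcases lt_or_ge t x with hx | hx
  · have := isProbabilityMeasure_expMeasure hr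
    have : (t - x) / k₂ ≤ 0 := div_nonpos_of_nonpos_of_nonneg (by linarith) hk₂.le
    simp [azemaFormula, hx, max_eq_right this]
  · have hZ : (fun y => azemaFormula (-r * (k₁ / k₂)) t (x, y))
        = (Ioi (t - x)).indicator (fun _ => Real.exp (-r * (k₁ / k₂) * (t - x))) := by
      ext y
      simp only [azemaFormula, indicator_apply, mem_Ioi, if_neg (not_lt.2 hx),
        sub_lt_iff_lt_add']
    rw [hZ, integral_indicator_const _ measurableSet_Ioi, measureReal_expMeasure_Ioi hr,
      max_eq_left (div_nonneg (sub_nonneg.2 hx) hk₂.le), max_eq_left (sub_nonneg.2 hx),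
      smul_eq_mul, smul_eq_mul, mul_one, ← Real.exp_add]
    congr 1
    field_simp
    linear_combination (t - x) * hk

lemma ProbabilityTheory.IndepFun.setIntegral_preimage_azemaFormula_eq {Ω : Type*}
    [MeasurableSpace Ω] {μ : Measure Ω} [IsFiniteMeasure μ] {X Y : Ω → ℝ}
    (hXY : IndepFun X Y μ) (hX : Measurable X) (hY : Measurable Y) {r k₁ k₂ : ℝ} (hr : 0 < r)
    (hY_law : μ.map Y = expMeasure r) (hk₁ : 0 < k₁) (hk₂ : 0 < k₂) (hk : k₁ + k₂ = 1)
    (t : ℝ) {S : Set ℝ} (hS : MeasurableSet S) :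
    ∫ ω in X ⁻¹' S, azemaFormula (-r * (k₁ / k₂)) t (X ω, Y ω) ∂μ
      = ∫ ω in X ⁻¹' S, tauIndicator k₂ t (X ω, Y ω) ∂μ := by
  have hc : -r * (k₁ / k₂) ≤ 0 := by have := div_pos hk₁ hk₂; nlinarith
  rw [hXY.setIntegral_preimage_comp_eq hX.aemeasurable hY.aemeasurable
      (integrable_azemaFormula hc) hS,
    hXY.setIntegral_preimage_comp_eq hX.aemeasurable hY.aemeasurable integrable_tauIndicator hS,
    hY_law]
  exact setIntegral_congr_fun hS fun x _ => (integral_tauIndicator_expMeasure hr hk₂ hk t x).symm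

section TwoJumps

variable {Ω : Type*}

noncomputable def twoJumpCounting (T₁ T₂ : Ω → ℝ) (s : ℝ) (ω : Ω) : ℝ :=
  (if T₁ ω ≤ s then 1 else 0) + (if T₂ ω ≤ s then 1 else 0)

abbrev naturalSigmaAlgebra (N : ℝ → Ω → ℝ) (t : ℝ) : MeasurableSpace Ω :=
  ⨆ s ∈ Icc (0 : ℝ) t, MeasurableSpace.comap (N s) inferInstance

lemma measurableSet_naturalSigmaAlgebra_preimage {N : ℝ → Ω → ℝ} {s t : ℝ} (hs : s ∈ Icc 0 t)
    {B : Set ℝ} (hB : MeasurableSet B) :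
    MeasurableSet[naturalSigmaAlgebra N t] (N s ⁻¹' B) :=
  le_iSup₂ (f := fun s (_ : s ∈ Icc (0 : ℝ) t) => MeasurableSpace.comap (N s) inferInstance)
    s hs _ ⟨B, hB, rfl⟩

lemma naturalSigmaAlgebra_le {m : MeasurableSpace Ω} {N : ℝ → Ω → ℝ} {t : ℝ}
    (h : ∀ s ∈ Icc 0 t, Measurable[m] (N s)) : naturalSigmaAlgebra N t ≤ m :=
  iSup₂_le fun s hs => (h s hs).comap_le

variable {T₁ T₂ : Ω → ℝ}

lemma measurable_twoJumpCounting {m : MeasurableSpace Ω} {s : ℝ}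
    (h₁ : MeasurableSet[m] {ω | T₁ ω ≤ s}) (h₂ : MeasurableSet[m] {ω | T₂ ω ≤ s}) :
    Measurable[m] (twoJumpCounting T₁ T₂ s) :=
  (Measurable.ite h₁ measurable_const measurable_const).add
    (Measurable.ite h₂ measurable_const measurable_const)

lemma twoJumpCounting_preimage_Ici_one (h12 : ∀ ω, T₁ ω ≤ T₂ ω) (s : ℝ) :
    twoJumpCounting T₁ T₂ s ⁻¹' Ici 1 = {ω | T₁ ω ≤ s} := by
  ext ω
  by_cases h₂ : T₂ ω ≤ s
  · norm_num [twoJumpCounting, (h12 ω).trans h₂, h₂]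
  · by_cases h₁ : T₁ ω ≤ s <;> simp [twoJumpCounting, h₁, h₂]

lemma twoJumpCounting_preimage_Ici_two (h12 : ∀ ω, T₁ ω ≤ T₂ ω) (s : ℝ) :
    twoJumpCounting T₁ T₂ s ⁻¹' Ici 2 = {ω | T₂ ω ≤ s} := by
  ext ω
  by_cases h₂ : T₂ ω ≤ s
  · norm_num [twoJumpCounting, (h12 ω).trans h₂, h₂]
  · by_cases h₁ : T₁ ω ≤ s <;> simp [twoJumpCounting, h₁, h₂]

variable {t : ℝ}

lemma measurableSet_firstJump_le (h₀ : ∀ ω, 0 < T₁ ω) (h12 : ∀ ω, T₁ ω ≤ T₂ ω) {a : ℝ}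
    (hat : a ≤ t) :
    MeasurableSet[naturalSigmaAlgebra (twoJumpCounting T₁ T₂) t] {ω | T₁ ω ≤ a} := by
  rcases lt_or_ge a 0 with ha | ha
  · convert MeasurableSet.empty
    exact eq_empty_of_forall_notMem fun ω hω => (ha.trans (h₀ ω)).not_ge hω
  · rw [← twoJumpCounting_preimage_Ici_one h12]
    exact measurableSet_naturalSigmaAlgebra_preimage ⟨ha, hat⟩ measurableSet_Ici

lemma measurableSet_secondJump_le (h12 : ∀ ω, T₁ ω ≤ T₂ ω) (ht : 0 ≤ t) :
    MeasurableSet[naturalSigmaAlgebra (twoJumpCounting T₁ T₂) t] {ω | T₂ ω ≤ t} := by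
  rw [← twoJumpCounting_preimage_Ici_two h12]
  exact measurableSet_naturalSigmaAlgebra_preimage ⟨ht, le_rfl⟩ measurableSet_Ici

lemma measurable_min_firstJump (h₀ : ∀ ω, 0 < T₁ ω) (h12 : ∀ ω, T₁ ω ≤ T₂ ω) :
    Measurable[naturalSigmaAlgebra (twoJumpCounting T₁ T₂) t] fun ω => min (T₁ ω) t := by
  refine measurable_of_Iic fun x => ?_
  rcases le_or_gt t x with hx | hx
  · convert MeasurableSet.univ
    exact eq_univ_of_forall fun ω => min_le_of_right_le hx
  · convert measurableSet_firstJump_le h₀ h12 hx.le using 1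
    ext ω
    simp [hx.not_ge]

lemma measurable_azemaFormula_comp (h₀ : ∀ ω, 0 < T₁ ω) (h12 : ∀ ω, T₁ ω ≤ T₂ ω) (ht : 0 ≤ t)
    (c : ℝ) :
    Measurable[naturalSigmaAlgebra (twoJumpCounting T₁ T₂) t] fun ω =>
      azemaFormula c t (T₁ ω, T₂ ω - T₁ ω) := by
  have h₁ : MeasurableSet[naturalSigmaAlgebra (twoJumpCounting T₁ T₂) t] {ω | t < T₁ ω} := by
    simpa only [compl_ofPred, not_le] using (measurableSet_firstJump_le h₀ h12 le_rfl).compl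
  have h₂ : MeasurableSet[naturalSigmaAlgebra (twoJumpCounting T₁ T₂) t] {ω | t < T₂ ω} := by
    simpa only [compl_ofPred, not_le] using (measurableSet_secondJump_le h12 ht).compl
  -- `T₁` itself is not `F t`-measurable, but it may be replaced by `min T₁ t` where it is used
  have hmin : (fun ω => azemaFormula c t (T₁ ω, T₂ ω - T₁ ω))
      = fun ω => if t < T₁ ω then 1
          else if t < T₂ ω then Real.exp (c * (t - min (T₁ ω) t)) else 0 := by
    ext ω
    rcases lt_or_ge t (T₁ ω) with h | h
    · simp [azemaFormula, h]
    · simp [azemaFormula, h.not_gt, min_eq_left h]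
  rw [hmin]
  have hexp : Measurable[naturalSigmaAlgebra (twoJumpCounting T₁ T₂) t] fun ω =>
      Real.exp (c * (t - min (T₁ ω) t)) :=
    Real.measurable_exp.comp ((measurable_const.sub (measurable_min_firstJump h₀ h12)).const_mul c)
  exact Measurable.ite h₁ measurable_const (Measurable.ite h₂ hexp measurable_const)

lemma naturalSigmaAlgebra_twoJumpCounting_le_generateFrom [MeasurableSpace Ω]
    (hT₂ : Measurable T₂) :
    naturalSigmaAlgebra (twoJumpCounting T₁ T₂) t ≤ MeasurableSpace.generateFrom
      ({s | MeasurableSet[MeasurableSpace.comap T₁ inferInstance] s} ∪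
        {s | MeasurableSet s ∧ s ⊆ {ω | T₂ ω ≤ t}}) := by
  refine naturalSigmaAlgebra_le fun s hs => measurable_twoJumpCounting ?_ ?_
  · exact MeasurableSpace.measurableSet_generateFrom (Or.inl ⟨Iic s, measurableSet_Iic, rfl⟩)
  · exact MeasurableSpace.measurableSet_generateFrom
      (Or.inr ⟨measurableSet_le hT₂ measurable_const, fun ω hω => le_trans hω hs.2⟩)

end TwoJumps

theorem condexp_convex_combination_jump_times_general {Ω : Type*} [MeasurableSpace Ω]
    (μ : Measure Ω) [IsProbabilityMeasure μ] (lam k₁ k₂ : ℝ) (hlam : 0 < lam)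
    (hk₁ : 0 < k₁) (hk₂ : 0 < k₂) (hk : k₁ + k₂ = 1)
    (T₁ T₂ : Ω → ℝ) (hT₁m : Measurable T₁) (hT₂m : Measurable T₂)
    (hpos : ∀ ω, 0 < T₁ ω ∧ T₁ ω < T₂ ω)
    (hd2 : Measure.map (fun ω => T₂ ω - T₁ ω) μ = expMeasure lam)
    (hindep : IndepFun T₁ (fun ω => T₂ ω - T₁ ω) μ)
    (N : ℝ → Ω → ℝ)
    (hN : ∀ t ω, N t ω = (if T₁ ω ≤ t then 1 else 0) + (if T₂ ω ≤ t then 1 else 0))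
    (F : ℝ → MeasurableSpace Ω)
    (hF : ∀ t, F t = ⨆ s ∈ Set.Icc (0 : ℝ) t, MeasurableSpace.comap (N s) inferInstance) :
    ∀ t : ℝ, 0 ≤ t →
      μ[Set.indicator {ω | t < k₁ * T₁ ω + k₂ * T₂ ω} (fun _ => (1 : ℝ)) | F t]
        =ᵐ[μ] fun ω =>
          if t < T₁ ω then 1
          else if t < T₂ ω then Real.exp (-lam * (k₁ / k₂) * (t - T₁ ω)) else 0 := by
  intro t ht
  obtain rfl : N = twoJumpCounting T₁ T₂ := funext₂ hN
  obtain rfl : F = naturalSigmaAlgebra (twoJumpCounting T₁ T₂) := funext hF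
  have h12 ω : T₁ ω ≤ T₂ ω := (hpos ω).2.le
  have hE : Measurable fun ω => T₂ ω - T₁ ω := hT₂m.sub hT₁m
  have hτ : {ω | t < k₁ * T₁ ω + k₂ * T₂ ω}.indicator (fun _ => (1 : ℝ))
      = fun ω => tauIndicator k₂ t (T₁ ω, T₂ ω - T₁ ω) := by
    ext ω
    have : k₁ * T₁ ω + k₂ * T₂ ω = T₁ ω + k₂ * (T₂ ω - T₁ ω) := by linear_combination T₁ ω * hk
    simp [indicator_apply, tauIndicator, this]
  have hZ : (fun ω => if t < T₁ ω then 1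
      else if t < T₂ ω then Real.exp (-lam * (k₁ / k₂) * (t - T₁ ω)) else 0)
      = fun ω => azemaFormula (-lam * (k₁ / k₂)) t (T₁ ω, T₂ ω - T₁ ω) := by
    ext ω
    simp [azemaFormula]
  have hm : naturalSigmaAlgebra (twoJumpCounting T₁ T₂) t ≤ ‹MeasurableSpace Ω› :=
    naturalSigmaAlgebra_le fun s _ => measurable_twoJumpCounting
      (measurableSet_le hT₁m measurable_const) (measurableSet_le hT₂m measurable_const)
  rw [hτ, hZ]
  refine (ae_eq_condExp_of_forall_setIntegral_preimage_eq hm hT₁m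
    (naturalSigmaAlgebra_twoJumpCounting_le_generateFrom hT₂m)
    (integrable_tauIndicator.comp_measurable (hT₁m.prodMk hE))
    ((integrable_azemaFormula (by have := div_pos hk₁ hk₂; nlinarith)).comp_measurable
      (hT₁m.prodMk hE))
    (measurable_azemaFormula_comp (fun ω => (hpos ω).1) h12 ht _).aestronglyMeasurable
    (fun ω hω => tauIndicator_eq_zero (by linarith) (sub_nonneg.2 (h12 ω)) (by simpa using hω))
    (fun ω hω => azemaFormula_eq_zero (sub_nonneg.2 (h12 ω)) (by simpa using hω))
    fun S hS => hindep.setIntegral_preimage_azemaFormula_eq hT₁m hE hlam hd2 hk₁ hk₂ hk t hS).symm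

/-- For the first two jump times `T₁, T₂` of a Poisson process with intensity `λ`,
`k₁, k₂ > 0` with `k₁ + k₂ = 1` and `τ = k₁T₁ + k₂T₂`, the Azéma supermartingale is
`Z_t = P(τ > t | F_t) = 1_{T₁ > t} + 1_{T₁ ≤ t} 1_{T₂ > t} e^{-λ(k₁/k₂)(t - T₁)}`,
`F` being the natural filtration of the counting process `N`. -/
theorem condexp_convex_combination_jump_times {Ω : Type*} [MeasurableSpace Ω]
    (μ : Measure Ω) [IsProbabilityMeasure μ] (lam k₁ k₂ : ℝ) (hlam : 0 < lam)
    (hk₁ : 0 < k₁) (hk₂ : 0 < k₂) (hk : k₁ + k₂ = 1)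
    (T₁ T₂ : Ω → ℝ) (hT₁m : Measurable T₁) (hT₂m : Measurable T₂)
    (hpos : ∀ ω, 0 < T₁ ω ∧ T₁ ω < T₂ ω)
    (hd1 : Measure.map T₁ μ = expMeasure lam)
    (hd2 : Measure.map (fun ω => T₂ ω - T₁ ω) μ = expMeasure lam)
    (hindep : IndepFun T₁ (fun ω => T₂ ω - T₁ ω) μ)
    (N : ℝ → Ω → ℝ)
    (hN : ∀ t ω, N t ω = (if T₁ ω ≤ t then 1 else 0) + (if T₂ ω ≤ t then 1 else 0))
    (F : ℝ → MeasurableSpace Ω)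
    (hF : ∀ t, F t = ⨆ s ∈ Set.Icc (0 : ℝ) t, MeasurableSpace.comap (N s) inferInstance) :
    ∀ t : ℝ, 0 ≤ t →
      μ[Set.indicator {ω | t < k₁ * T₁ ω + k₂ * T₂ ω} (fun _ => (1 : ℝ)) | F t]
        =ᵐ[μ] fun ω =>
          if t < T₁ ω then 1
          else if t < T₂ ω then Real.exp (-lam * (k₁ / k₂) * (t - T₁ ω)) else 0 :=
  condexp_convex_combination_jump_times_general μ lam k₁ k₂ hlam hk₁ hk₂ hk T₁ T₂ hT₁m hT₂m hpos hd2
    hindep N hN F hF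
end
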